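/- Let T ≥ 0, η > 0 and α > 2. For λ_p > 0 and s > 0 define P(λ_p, s) := (1/s²)·∫_{S₀(s)} e^{−π λ_p η^{2/α} ‖u‖²} · [∏_{z ∈ ℤ²\{(0,0)}} (1 + T‖u‖^α/‖u + s·z‖^α)^{−1}] · exp(−2π λ_p ∫_{‖u‖ η^{1/α}}^{∞} (T η ‖u‖^α v^{1−α})/(1 + T η ‖u‖^α v^{−α}) dv) du + ∫_0^{∞} (1/s²)·[∫_{S₀(s) \ B(0, r η^{−1/α})} ∏_{z ∈ ℤ²} (1 + η^{−1} T r^α/‖u′ + s·z‖^α)^{−1} du′] · exp(−2π λ_p ∫_r^{∞} (T r^α v^{1−α})/(1 + T r^α v^{−α}) dv) · 2π λ_p r e^{−π λ_p r²} dr. Then P(λ_p, s) = P(λ_p s², 1) for all λ_p, s > 0; that is, P(λ_p, s) depends on (λ_p, s) only through the intensity ratio ρ_λ = λ_p s². -/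

import Mathlib

open MeasureTheory Real

/-- The grid point `s·z = (s z₁, s z₂)` for `z ∈ ℤ²`. -/
noncomputable def gridPt (s : ℝ) (k : ℤ × ℤ) : EuclideanSpace ℝ (Fin 2) :=
  (WithLp.equiv 2 (Fin 2 → ℝ)).symm ![s * (k.1 : ℝ), s * (k.2 : ℝ)]

/-- The square `S₀(s) = [−s/2, s/2] × [−s/2, s/2]`. -/
def square (s : ℝ) : Set (EuclideanSpace ℝ (Fin 2)) :=
  {u | u 0 ∈ Set.Icc (-(s / 2)) (s / 2) ∧ u 1 ∈ Set.Icc (-(s / 2)) (s / 2)}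

/-- The coverage probability `P(λ_p, s)` of Theorem 2: the first term is
`P(SIR ≥ T, grid association)` and the second is `P(SIR ≥ T, Poisson association)`. -/
noncomputable def covP (T η α lamp s : ℝ) : ℝ :=
  (1 / s ^ 2) *
    ∫ u in square s,
      Real.exp (-(π * lamp * η ^ ((2:ℝ) / α) * ‖u‖ ^ 2)) *
      (∏' z : {z : ℤ × ℤ // z ≠ (0, 0)},
        (1 + T * ‖u‖ ^ α / ‖u + gridPt s (z : ℤ × ℤ)‖ ^ α)⁻¹) *
      Real.exp (-(2 * π * lamp *
        ∫ v in Set.Ioi (‖u‖ * η ^ ((1:ℝ) / α)),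
          T * η * ‖u‖ ^ α * v ^ (1 - α) / (1 + T * η * ‖u‖ ^ α * v ^ (-α))))
  + ∫ r in Set.Ioi (0 : ℝ),
      (1 / s ^ 2) *
      (∫ u' in square s \ Metric.closedBall 0 (r * η ^ (-(1:ℝ) / α)),
        ∏' z : ℤ × ℤ, (1 + η⁻¹ * T * r ^ α / ‖u' + gridPt s z‖ ^ α)⁻¹) *
      Real.exp (-(2 * π * lamp *
        ∫ v in Set.Ioi r, T * r ^ α * v ^ (1 - α) / (1 + T * r ^ α * v ^ (-α)))) *
      (2 * π * lamp * r * Real.exp (-(π * lamp * r ^ 2)))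

/-!
Everything scales with the grid spacing. Under `u = s û` the square `S₀(s)` becomes `S₀(1)`
with Jacobian `s²`, the grid distances `‖u + s z‖` all pick up the factor `s`, so the path-loss
ratios in the products are unchanged; the substitutions `r = s r̂` and `v = s w` do the same for
the Poisson radius and the interference integrals, whose integrands are homogeneous of degree one.
The Jacobians cancel the prefactor `1/s²` or combine with `λ_p` into `λ_p s²`.
-/

open Pointwise

lemma gridPt_eq_smul (s : ℝ) (k : ℤ × ℤ) : gridPt s k = s • gridPt 1 k := by
  ext i
  fin_cases i <;> simp [gridPt]

section Scaling

variable {s : ℝ}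

/-- Unlike `Real.mul_rpow`, no sign condition on `x`: for `x < 0` both sides carry the same
factor `cos (z * π)`. -/
lemma Real.mul_rpow_of_pos_left (hs : 0 < s) (x z : ℝ) : (s * x) ^ z = s ^ z * x ^ z := by
  rcases le_or_gt 0 x with hx | hx
  · exact Real.mul_rpow hs.le hx
  · rw [rpow_def_of_neg (mul_neg_of_pos_of_neg hs hx), rpow_def_of_neg hx, rpow_def_of_pos hs,
      log_mul hs.ne' hx.ne, add_mul, exp_add]
    ring

lemma mul_mul_rpow_div_mul_rpow (hs : 0 < s) (c a b α : ℝ) :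
    c * (s * a) ^ α / (s * b) ^ α = c * a ^ α / b ^ α := by
  rw [mul_rpow_of_pos_left hs, mul_rpow_of_pos_left hs, mul_left_comm,
    mul_div_mul_left _ _ (rpow_pos_of_pos hs α).ne']

lemma norm_smul_add_gridPt (hs : 0 < s) (x : EuclideanSpace ℝ (Fin 2)) (k : ℤ × ℤ) :
    ‖s • x + gridPt s k‖ = s * ‖x + gridPt 1 k‖ := by
  rw [gridPt_eq_smul s, ← smul_add, norm_smul_of_nonneg hs.le]

lemma square_eq_smul (hs : 0 < s) : square s = s • square 1 := by
  ext u
  rw [Set.mem_smul_set_iff_inv_smul_mem₀ hs.ne']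
  simp only [square, Set.mem_ofPred_eq, PiLp.smul_apply, smul_eq_mul, Set.mem_Icc,
    inv_mul_eq_div, le_div_iff₀ hs, div_le_iff₀ hs]
  constructor <;> rintro ⟨⟨a, b⟩, ⟨c, d⟩⟩ <;>
    exact ⟨⟨by linarith, by linarith⟩, by linarith, by linarith⟩

lemma smul_set_diff_closedBall_zero {E : Type*} [NormedAddCommGroup E] [NormedSpace ℝ E]
    (hs : 0 < s) (A : Set E) (ρ : ℝ) :
    s • A \ Metric.closedBall 0 (s * ρ) = s • (A \ Metric.closedBall 0 ρ) := by
  rw [Set.smul_set_sdiff₀ hs.ne', smul_closedBall' hs.ne', smul_zero, Real.norm_of_nonneg hs.le]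

lemma setIntegral_smul_set {n : ℕ} (hs : 0 < s) (A : Set (EuclideanSpace ℝ (Fin n)))
    (f : EuclideanSpace ℝ (Fin n) → ℝ) :
    ∫ x in s • A, f x = s ^ n * ∫ x in A, f (s • x) := by
  rw [Measure.setIntegral_comp_smul_of_pos volume f A hs, finrank_euclideanSpace_fin,
    smul_eq_mul, mul_inv_cancel_left₀ (by positivity)]

lemma integral_Ioi_mul_left_eq (hs : 0 < s) (g : ℝ → ℝ) (a : ℝ) :
    ∫ v in Set.Ioi (s * a), g v = s * ∫ w in Set.Ioi a, g (s * w) := by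
  rw [integral_comp_mul_left_Ioi g a hs, smul_eq_mul, mul_inv_cancel_left₀ hs.ne']

lemma integral_Ioi_zero_eq_mul (hs : 0 < s) (g : ℝ → ℝ) :
    ∫ v in Set.Ioi 0, g v = s * ∫ w in Set.Ioi 0, g (s * w) := by
  simpa using integral_Ioi_mul_left_eq hs g 0

/-- The interference integrand `c b^α v^{1-α} / (1 + c b^α v^{-α})` is homogeneous of degree one
in `(b, v)`, so the substitution `v = s w` produces the factor `s²`. -/
lemma integral_Ioi_interference_scale (hs : 0 < s) (c a b α : ℝ) :
    ∫ v in Set.Ioi (s * a), c * (s * b) ^ α * v ^ (1 - α) / (1 + c * (s * b) ^ α * v ^ (-α))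
      = s ^ 2 * ∫ v in Set.Ioi a, c * b ^ α * v ^ (1 - α) / (1 + c * b ^ α * v ^ (-α)) := by
  have hsα : s ^ α * s ^ (1 - α) = s := by rw [← rpow_add hs]; simp
  have hsα' : s ^ α * s ^ (-α) = 1 := by rw [← rpow_add hs]; simp
  have homogeneous (w : ℝ) :
      c * (s * b) ^ α * (s * w) ^ (1 - α) / (1 + c * (s * b) ^ α * (s * w) ^ (-α))
        = s * (c * b ^ α * w ^ (1 - α) / (1 + c * b ^ α * w ^ (-α))) := by
    simp only [mul_rpow_of_pos_left hs]
    rw [← mul_div_assoc]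
    congr 1
    · linear_combination (c * b ^ α * w ^ (1 - α)) * hsα
    · linear_combination (c * b ^ α * w ^ (-α)) * hsα'
  rw [integral_Ioi_mul_left_eq hs, funext homogeneous, integral_const_mul, ← mul_assoc, sq]

end Scaling

theorem covP_scale_invariant_general (T η α : ℝ) :
    ∀ lamp s : ℝ, 0 < lamp → 0 < s → covP T η α lamp s = covP T η α (lamp * s ^ 2) 1 := by
  intro lamp s _ hs
  have hs2 : s ^ 2 ≠ 0 := by positivity
  rw [covP, covP, square_eq_smul hs, setIntegral_smul_set hs, one_div, inv_mul_cancel_left₀ hs2,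
    one_pow, div_one, one_mul]
  refine integral_congr_ae (.of_forall fun x => ?_)
  dsimp only
  congr 1
  · simp only [norm_smul_of_nonneg hs.le x, norm_smul_add_gridPt hs, mul_mul_rpow_div_mul_rpow hs]
    rw [mul_assoc s, integral_Ioi_interference_scale hs]
    ring_nf
  · rw [integral_Ioi_zero_eq_mul hs, ← integral_const_mul]
    refine integral_congr_ae (.of_forall fun r => ?_)
    simp only [mul_assoc s r, smul_set_diff_closedBall_zero hs, setIntegral_smul_set hs,
      norm_smul_add_gridPt hs, mul_mul_rpow_div_mul_rpow hs, inv_mul_cancel_left₀ hs2,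
      integral_Ioi_interference_scale hs, one_mul]
    ring_nf

/-- Theorem 2, scale invariance: the coverage probability `P(λ_p, s)`
depends on `(λ_p, s)` only through the intensity ratio `ρ_λ = λ_p s²`. -/
theorem covP_scale_invariant (T η α : ℝ) (hT : 0 ≤ T) (hη : 0 < η) (hα : 2 < α) :
    ∀ lamp s : ℝ, 0 < lamp → 0 < s → covP T η α lamp s = covP T η α (lamp * s ^ 2) 1 :=
  covP_scale_invariant_general T η α
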